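/- Suppose Y is a submanifold of a contact manifold (M, ξ = ker α). If Y × ℝ is a symplectic coisotropic submanifold of the symplectization (M × ℝ, ω = d(e^θ α)), then Y is a contact coisotropic submanifold of (M, ξ = ker α). -/

import Mathlib

open scoped Manifold
open Filter

noncomputable section

/-- Reinterpret a tangent vector to `ℝ` as a real number (`TangentSpace 𝓘(ℝ, ℝ) t` is `ℝ`). -/
def tanR {t : ℝ} (v : TangentSpace 𝓘(ℝ, ℝ) t) : ℝ := v

/-- Reinterpret a real number as a tangent vector to `ℝ`. -/
def rTan (t : ℝ) (v : ℝ) : TangentSpace 𝓘(ℝ, ℝ) t := v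

/-- Pointwise data of a co-oriented contact manifold `(M, ξ = ker α)`: the contact form `α`,
its exterior derivative `dα` and the Reeb vector field `R`, subject to the pointwise
contact conditions (`α` nonvanishing and `dα` nondegenerate on `ξ = ker α`) and the
defining properties of the Reeb field (`α(R) = 1`, `ι_R dα = 0`). -/
structure ContactForm {E : Type*} [NormedAddCommGroup E] [NormedSpace ℝ E]
    {H : Type*} [TopologicalSpace H] (I : ModelWithCorners ℝ E H)
    (M : Type*) [TopologicalSpace M] [ChartedSpace H M] where
  α : ∀ p : M, TangentSpace I p →ₗ[ℝ] ℝ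
  dα : ∀ p : M, TangentSpace I p →ₗ[ℝ] TangentSpace I p →ₗ[ℝ] ℝ
  R : ∀ p : M, TangentSpace I p
  dα_skew : ∀ (p : M) (v w : TangentSpace I p), dα p v w = - dα p w v
  α_ne : ∀ p : M, α p ≠ 0
  nondeg : ∀ (p : M) (v : TangentSpace I p), α p v = 0 →
    (∀ w : TangentSpace I p, α p w = 0 → dα p v w = 0) → v = 0
  α_R : ∀ p : M, α p (R p) = 1
  dα_R : ∀ (p : M) (v : TangentSpace I p), dα p (R p) v = 0

variable {E : Type*} [NormedAddCommGroup E] [NormedSpace ℝ E]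
  {H : Type*} [TopologicalSpace H] {I : ModelWithCorners ℝ E H}
  {M : Type*} [TopologicalSpace M] [ChartedSpace H M] [IsManifold I (⊤ : ℕ∞) M]

/-- A submanifold of `M`, encoded as its carrier set together with its tangent spaces;
the tangent space at a point of the carrier is characterized as the set of velocity
vectors of smooth curves through the point staying in the carrier. -/
structure Subman (I : ModelWithCorners ℝ E H) (M : Type*) [TopologicalSpace M]
    [ChartedSpace H M] [IsManifold I (⊤ : ℕ∞) M] where
  carrier : Set M
  tangent : ∀ p : M, Submodule ℝ (TangentSpace I p)
  mem_tangent_iff : ∀ p ∈ carrier, ∀ v : TangentSpace I p,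
    v ∈ tangent p ↔ ∃ γ : ℝ → M, ContMDiff 𝓘(ℝ, ℝ) I (⊤ : ℕ∞) γ ∧ γ 0 = p ∧
      (∀ᶠ t in nhds (0 : ℝ), γ t ∈ carrier) ∧ mfderiv 𝓘(ℝ, ℝ) I γ 0 (rTan 0 1) = v

/-- A submanifold `Y` is contact coisotropic if at every point `p ∈ Y` the `dα`-symplectic
orthogonal complement of `T_pY ∩ ξ_p` inside `(ξ_p, dα|_{ξ_p})` is contained in
`T_pY ∩ ξ_p`. -/
def ContactForm.Coisotropic (c : ContactForm I M) (Y : Subman I M) : Prop :=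
  ∀ p ∈ Y.carrier, ∀ v : TangentSpace I p, c.α p v = 0 →
    (∀ w : TangentSpace I p, w ∈ Y.tangent p → c.α p w = 0 → c.dα p v w = 0) →
    (v ∈ Y.tangent p ∧ c.α p v = 0)

/-- `X` is the contact vector field of `G`: `α(X) = G` and `ι_X dα = dG(R)·α − dG`. -/
def ContactForm.IsContactField (c : ContactForm I M) (G : M → ℝ)
    (X : ∀ p : M, TangentSpace I p) : Prop :=
  ∀ p : M, c.α p (X p) = G p ∧
    ∀ v : TangentSpace I p, c.dα p (X p) v =
      tanR (mfderiv I 𝓘(ℝ, ℝ) G p (c.R p)) * c.α p v - tanR (mfderiv I 𝓘(ℝ, ℝ) G p v)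

/-- The contact Poisson bracket `{F,G}_c = dF(X_G) + dG(R_α)·F`, expressed in terms of a
choice `XG` of the contact vector field of `G`. -/
def ContactForm.cBracket (c : ContactForm I M) (F G : M → ℝ)
    (XG : ∀ p : M, TangentSpace I p) (p : M) : ℝ :=
  tanR (mfderiv I 𝓘(ℝ, ℝ) F p (XG p)) + tanR (mfderiv I 𝓘(ℝ, ℝ) G p (c.R p)) * F p

/-- The symplectic form `ω = d(e^θ α)` of the symplectization `M × ℝ`, evaluated at a point
`q = (p, θ)` on tangent vectors `(v, a), (w, b)`:
`ω = e^θ (dα(v,w) + a·α(w) − b·α(v))`. -/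
def symplForm (c : ContactForm I M) (q : M × ℝ)
    (v w : TangentSpace I q.1 × ℝ) : ℝ :=
  Real.exp q.2 * (c.dα q.1 v.1 w.1 + v.2 * c.α q.1 w.1 - w.2 * c.α q.1 v.1)

/-- A Lagrangian submanifold of the symplectization `(M × ℝ, d(e^θ α))` of a `(2n+1)`-dimensional
contact manifold: an `(n+1)`-dimensional submanifold on which the symplectic form vanishes. -/
def IsLagrangian (c : ContactForm I M) (n : ℕ)
    (Lh : Subman (I.prod 𝓘(ℝ, ℝ)) (M × ℝ)) : Prop :=
  (∀ q ∈ Lh.carrier, Module.finrank ℝ (Lh.tangent q) = n + 1) ∧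
  ∀ q ∈ Lh.carrier, ∀ v ∈ Lh.tangent q, ∀ w ∈ Lh.tangent q, symplForm c q v w = 0

/-- A subset `L ⊆ M` is pre-Lagrangian if it is the image under the projection
`M × ℝ → M` of a Lagrangian submanifold of the symplectization. -/
def IsPreLagrangian (c : ContactForm I M) (n : ℕ) (L : Set M) : Prop :=
  ∃ Lh : Subman (I.prod 𝓘(ℝ, ℝ)) (M × ℝ), IsLagrangian c n Lh ∧ Prod.fst '' Lh.carrier = L

/-! Let `v ∈ ξ_p` be `dα`-orthogonal to `T_pY ∩ ξ_p`. On `T_pY` the functional `dα(v, ·)` vanishes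
on the kernel of `α`, so it equals `a · α` there for some `a ∈ ℝ`. Since `α(v) = 0`, this says
exactly that `(v, -a)` is `ω`-orthogonal to `T_pY × ℝ`, hence `v ∈ T_pY` by the coisotropy of
`Y × ℝ`. -/

theorem LinearMap.exists_smul_eq_of_ker_le {𝕜 E : Type*} [Field 𝕜] [AddCommGroup E]
    [Module 𝕜 E] {f g : E →ₗ[𝕜] 𝕜} (h : LinearMap.ker g ≤ LinearMap.ker f) :
    ∃ a : 𝕜, a • g = f := by
  have hf : f ∈ Submodule.span 𝕜 (Set.range fun _ : Unit ↦ g) :=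
    mem_span_of_iInf_ker_le_ker (by simpa only [ciInf_const] using h)
  rwa [Set.range_const, Submodule.mem_span_singleton] at hf

theorem Submodule.exists_forall_eq_mul_of_forall_eq_zero {𝕜 E : Type*} [Field 𝕜]
    [AddCommGroup E] [Module 𝕜 E] {V : Submodule 𝕜 E} {f g : E →ₗ[𝕜] 𝕜}
    (h : ∀ w ∈ V, g w = 0 → f w = 0) : ∃ a : 𝕜, ∀ w ∈ V, f w = a * g w := by
  obtain ⟨a, ha⟩ := LinearMap.exists_smul_eq_of_ker_le
    (f := f.domRestrict V) (g := g.domRestrict V) fun w hw ↦ h w w.2 hw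
  exact ⟨a, fun w hw ↦ (LinearMap.congr_fun ha ⟨w, hw⟩).symm⟩

/-- Coisotropic correspondence, symplectic ⇒ contact.
If `Y` is a submanifold of `(M, ξ = ker α)` such that `Y × ℝ` is a symplectic coisotropic
submanifold of the symplectization `(M × ℝ, ω = d(e^θ α))` (at every `(p, θ)` with `p ∈ Y`
the `ω`-orthogonal complement of `T_pY × ℝ` is contained in `T_pY × ℝ`), then `Y` is a
contact coisotropic submanifold of `(M, ξ = ker α)`. -/
theorem coisotropic_of_symplectization
    (c : ContactForm I M) (Y : Subman I M)
    (h : ∀ p ∈ Y.carrier, ∀ θ : ℝ, ∀ v : TangentSpace I p × ℝ,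
      (∀ w : TangentSpace I p × ℝ, w.1 ∈ Y.tangent p → symplForm c (p, θ) v w = 0) →
      v.1 ∈ Y.tangent p) :
    c.Coisotropic Y := by
  intro p hp v hv hperp
  obtain ⟨a, ha⟩ := Submodule.exists_forall_eq_mul_of_forall_eq_zero hperp
  refine ⟨h p hp 0 (v, -a) fun w hw ↦ ?_, hv⟩
  simp only [symplForm, hv, ha w.1 hw]
  ring

end
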